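/- arXiv:1805.04966 — 3 statements merged into one kernel-verified Lean document; each statement's English description precedes it below -/
import Mathlib

section
/- For any connected graph G of order n ≥ 3, 2 ≤ 𝔡(G) ≤ n−1. Moreover, 𝔡(G) = n if and only if G is isomorphic to K₂. -/
open SimpleGraph Finset

/-- Distance from a vertex to a finite set of vertices:
`min_{w ∈ S} d(u, w)`. -/
noncomputable def setDist {V : Type*} (G : SimpleGraph V) (u : V) (S : Finset V) : ℕ :=
  sInf (G.dist u '' (S : Set V))

/-- The set `𝒟_G(x,y)` of vertices distinguishing `x` and `y`. -/
noncomputable def DG {V : Type*} (G : SimpleGraph V) [Fintype V] (x y : V) : Finset V :=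
  Finset.univ.filter fun z => G.dist z x ≠ G.dist z y

/-- `𝔡(G) = min_{x ≠ y} |𝒟_G(x,y)|`. -/
noncomputable def frakd {V : Type*} (G : SimpleGraph V) [Fintype V] : ℕ :=
  sInf {m | ∃ x y : V, x ≠ y ∧ (DG G x y).card = m}

/-- `𝔡*(G) = max_{x ≠ y} |𝒟_G(x,y)|`. -/
noncomputable def frakdStar {V : Type*} (G : SimpleGraph V) [Fintype V] : ℕ :=
  sSup {m | ∃ x y : V, x ≠ y ∧ (DG G x y).card = m}

/-- A partition of the vertex set is a `k`-partition generator if every pair of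
distinct vertices is distinguished by at least `k` parts. -/
noncomputable def IsKPartitionGenerator {V : Type*} (G : SimpleGraph V) [Fintype V]
    [DecidableEq V] (k : ℕ) (P : Finpartition (Finset.univ : Finset V)) : Prop :=
  ∀ u v : V, u ≠ v → k ≤ (P.parts.filter fun S => setDist G u S ≠ setDist G v S).card

/-- The `k`-partition dimension `pd_k(G)`. -/
noncomputable def pd {V : Type*} (G : SimpleGraph V) [Fintype V] [DecidableEq V] (k : ℕ) : ℕ :=
  sInf {m | ∃ P : Finpartition (Finset.univ : Finset V),
    IsKPartitionGenerator G k P ∧ P.parts.card = m}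

/-- A set of vertices is a `k`-metric generator if every pair of distinct
vertices is distinguished by at least `k` of its vertices. -/
def IsKMetricGenerator {V : Type*} (G : SimpleGraph V) [Fintype V] (k : ℕ) (W : Finset V) : Prop :=
  ∀ u v : V, u ≠ v → k ≤ (W.filter fun z => G.dist z u ≠ G.dist z v).card

/-- The `k`-metric dimension `dim_k(G)`. -/
noncomputable def metricDim {V : Type*} (G : SimpleGraph V) [Fintype V] (k : ℕ) : ℕ :=
  sInf {m | ∃ W : Finset V, IsKMetricGenerator G k W ∧ W.card = m}

lemma mem_DG_iff {V : Type*} (G : SimpleGraph V) [Fintype V] {x y z : V} :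
    z ∈ DG G x y ↔ G.dist z x ≠ G.dist z y := by simp [DG]

lemma two_le_DG {V : Type*} (G : SimpleGraph V) [Fintype V] [DecidableEq V]
    (hG : G.Connected) {x y : V} (hxy : x ≠ y) : 2 ≤ (DG G x y).card := by
  have hx : x ∈ DG G x y := by
    rw [mem_DG_iff, G.dist_self]
    exact (hG.pos_dist_of_ne hxy).ne
  have hy : y ∈ DG G x y := by
    rw [mem_DG_iff, G.dist_self]
    exact (hG.pos_dist_of_ne hxy.symm).ne'
  calc 2 = ({x, y} : Finset V).card := (Finset.card_pair hxy).symm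
    _ ≤ (DG G x y).card := by
        apply Finset.card_le_card
        intro z hz
        rcases Finset.mem_insert.mp hz with rfl | hz
        · exact hx
        · rw [Finset.mem_singleton.mp hz]; exact hy

/-- In a connected graph of order at least 3, some vertex has two distinct neighbors. -/
lemma exists_two_neighbors {V : Type*} [Fintype V] (G : SimpleGraph V)
    (hG : G.Connected) (h3 : 3 ≤ Fintype.card V) :
    ∃ z x y : V, x ≠ y ∧ G.Adj z x ∧ G.Adj z y := by
  by_contra hcon
  push_neg at hcon
  have h : ∀ z x y : V, G.Adj z x → G.Adj z y → x = y := by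
    intro z x y hzx hzy
    by_contra hne
    exact (hcon z x y hne hzx) hzy
  have : Nontrivial V := Fintype.one_lt_card_iff_nontrivial.mp (by omega)
  obtain ⟨x, y, hxy⟩ := exists_pair_ne V
  obtain ⟨a, hxa⟩ : ∃ a, G.Adj x a := by
    obtain ⟨w⟩ := hG x y
    cases w with
    | nil => exact absurd rfl hxy
    | cons h p => exact ⟨_, h⟩
  have key : ∀ (u v : V) (p : G.Walk u v), (u = x ∨ u = a) → (v = x ∨ v = a) := by
    intro u v p
    induction p with
    | nil => exact id
    | cons had p ih =>
      rename_i u' b v' 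
      intro hu
      apply ih
      rcases hu with rfl | rfl
      · exact Or.inr (h u' b a had hxa)
      · exact Or.inl (h u' b x had hxa.symm)
  obtain ⟨w, hwx, hwa⟩ : ∃ w : V, w ≠ x ∧ w ≠ a := by
    by_contra hcon2
    push_neg at hcon2
    classical
    have hsub : (Finset.univ : Finset V) ⊆ {x, a} := by
      intro w _
      rcases eq_or_ne w x with rfl | hne
      · exact Finset.mem_insert_self _ _
      · exact Finset.mem_insert_of_mem (Finset.mem_singleton.mpr (hcon2 w hne))
    have := Finset.card_le_card hsub
    have h2 : ({x, a} : Finset V).card ≤ 2 :=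
      (Finset.card_insert_le _ _).trans (by simp)
    rw [Finset.card_univ] at this
    omega
  obtain ⟨p⟩ := hG x w
  rcases key x w p (Or.inl rfl) with rfl | rfl
  · exact hwx rfl
  · exact hwa rfl

lemma connected_card_two_top {V : Type*} [Fintype V] [DecidableEq V] (G : SimpleGraph V)
    (hG : G.Connected) (h2 : Fintype.card V = 2) : G = ⊤ := by
  ext u v
  simp only [top_adj]
  constructor
  · exact G.ne_of_adj
  · intro huv
    obtain ⟨w⟩ := hG u v
    cases w with
    | nil => exact absurd rfl huv
    | cons h p =>
      rename_i b
      have hbu : b ≠ u := (G.ne_of_adj h).symm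
      have hbv : b = v := by
        by_contra hbv
        have hc3 : ({u, b, v} : Finset V).card = 3 := by
          rw [Finset.card_insert_of_notMem (by simp [huv, Ne.symm hbu]),
            Finset.card_insert_of_notMem (by simp [hbv]), Finset.card_singleton]
        have := Finset.card_le_univ ({u, b, v} : Finset V)
        rw [h2, hc3] at this
        omega
      rwa [← hbv]

theorem stmt_3 {V : Type*} [Fintype V] [DecidableEq V] (G : SimpleGraph V)
    (hG : G.Connected) (hn : 2 ≤ Fintype.card V) :
    (3 ≤ Fintype.card V → 2 ≤ frakd G ∧ frakd G ≤ Fintype.card V - 1) ∧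
    (frakd G = Fintype.card V ↔ Nonempty (G ≃g (⊤ : SimpleGraph (Fin 2)))) := by
  obtain ⟨x0, y0, hxy0⟩ := Fintype.exists_pair_of_one_lt_card (by omega : 1 < Fintype.card V)
  have hSne : {m | ∃ x y : V, x ≠ y ∧ (DG G x y).card = m}.Nonempty :=
    ⟨_, x0, y0, hxy0, rfl⟩
  have hmem := Nat.sInf_mem hSne
  obtain ⟨x1, y1, hxy1, hc1⟩ := hmem
  have h2le : 2 ≤ frakd G := by
    rw [frakd, ← hc1]
    exact two_le_DG G hG hxy1
  have hub : 3 ≤ Fintype.card V → frakd G ≤ Fintype.card V - 1 := by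
    intro h3
    obtain ⟨z, x, y, hxy, hzx, hzy⟩ := exists_two_neighbors G hG h3
    have hz : z ∉ DG G x y := by
      rw [mem_DG_iff, not_not, dist_eq_one_iff_adj.mpr hzx, dist_eq_one_iff_adj.mpr hzy]
    have hsub : DG G x y ⊆ Finset.univ.erase z := by
      intro w hw
      exact Finset.mem_erase.mpr ⟨fun h => hz (h ▸ hw), Finset.mem_univ _⟩
    have hcard : (DG G x y).card ≤ Fintype.card V - 1 := by
      have := Finset.card_le_card hsub
      rwa [Finset.card_erase_of_mem (Finset.mem_univ z), Finset.card_univ] at this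
    exact le_trans (Nat.sInf_le ⟨x, y, hxy, rfl⟩) hcard
  refine ⟨fun h3 => ⟨h2le, hub h3⟩, ?_, ?_⟩
  · intro heq
    have h2 : Fintype.card V = 2 := by
      by_contra hne
      have h3 : 3 ≤ Fintype.card V := by omega
      have := hub h3
      omega
    have hGtop := connected_card_two_top G hG h2
    exact ⟨hGtop ▸ Iso.completeGraph (Fintype.equivFinOfCardEq h2)⟩
  · rintro ⟨e⟩
    have h2 : Fintype.card V = 2 := by
      rw [← Fintype.card_fin 2]
      exact Fintype.card_congr e.toEquiv
    rw [h2]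
    have hall : ∀ x y : V, x ≠ y → (DG G x y).card = 2 := by
      intro x y hxy
      have huniv : DG G x y = Finset.univ := by
        apply Finset.eq_univ_of_card
        rw [h2]
        refine le_antisymm (Finset.card_le_card (Finset.subset_univ _) |>.trans (by rw [Finset.card_univ, h2])) (two_le_DG G hG hxy)
      rw [huniv, Finset.card_univ, h2]
    apply le_antisymm
    · exact Nat.sInf_le ⟨x0, y0, hxy0, hall x0 y0 hxy0⟩
    · exact h2le
end

section
/- For a nontrivial connected graph G and an integer k with 1 ≤ k ≤ 𝔡(G), pd_k(G) = k if and only if k = 2 and G ≅ K₂. -/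
open SimpleGraph Finset

lemma setDist_singleton {V : Type*} (G : SimpleGraph V) (u z : V) :
    setDist G u {z} = G.dist u z := by
  simp [setDist]

lemma setDist_eq_zero_of_mem {V : Type*} (G : SimpleGraph V) {u : V} {S : Finset V}
    (h : u ∈ S) : setDist G u S = 0 :=
  Nat.sInf_eq_zero.mpr (Or.inl ⟨u, by simpa using h, SimpleGraph.dist_self⟩)

lemma walk_cases {V : Type*} {G : SimpleGraph V}
    (huniq : ∀ a b c : V, G.Adj a b → G.Adj a c → b = c) :
    ∀ {z u : V}, G.Walk z u → u = z ∨ G.Adj z u := by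
  intro z u w
  induction w with
  | nil => exact Or.inl rfl
  | @cons a y u h p ih =>
    rcases ih with rfl | hadj
    · exact Or.inr h
    · exact Or.inl (huniq _ _ _ hadj h.symm)

theorem stmt_12 {V : Type*} [Fintype V] [DecidableEq V] (G : SimpleGraph V)
    (hG : G.Connected) (hn : 2 ≤ Fintype.card V)
    (k : ℕ) (hk : 1 ≤ k) (hk' : k ≤ frakd G) :
    pd G k = k ↔ k = 2 ∧ Nonempty (G ≃g (⊤ : SimpleGraph (Fin 2))) := by
  obtain ⟨u₀, v₀, huv₀⟩ := Fintype.exists_pair_of_one_lt_card hn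
  constructor
  · intro hpd
    -- the defining set is nonempty and k belongs to it
    have hne : {m | ∃ P : Finpartition (Finset.univ : Finset V),
        IsKPartitionGenerator G k P ∧ P.parts.card = m}.Nonempty := by
      by_contra h
      rw [Set.not_nonempty_iff_eq_empty] at h
      rw [pd, h, Nat.sInf_empty] at hpd
      omega
    have hkmem := Nat.sInf_mem hne
    rw [show sInf {m | ∃ P : Finpartition (Finset.univ : Finset V),
        IsKPartitionGenerator G k P ∧ P.parts.card = m} = pd G k from rfl, hpd] at hkmem
    obtain ⟨P, hgen, hcard⟩ := hkmem
    -- every part distinguishes every pair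
    have hfilt : ∀ u v : V, u ≠ v →
        (P.parts.filter fun S => setDist G u S ≠ setDist G v S) = P.parts := by
      intro u v huv
      exact Finset.eq_of_subset_of_card_le (Finset.filter_subset _ _)
        (by rw [hcard]; exact hgen u v huv)
    -- every part is a singleton
    have hsing : ∀ S ∈ P.parts, S.card = 1 := by
      intro S hS
      have hSne : S.Nonempty := P.nonempty_of_mem_parts hS
      rcases Finset.eq_singleton_or_nontrivial hSne.choose_spec with h | h
      · rw [h]; simp
      · obtain ⟨u, hu, v, hv, huv⟩ := h
        have := hfilt u v huv
        have hmem : S ∈ P.parts.filter fun T => setDist G u T ≠ setDist G v T := by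
          rw [this]; exact hS
        rw [Finset.mem_filter] at hmem
        exact absurd (by rw [setDist_eq_zero_of_mem G hu, setDist_eq_zero_of_mem G hv])
          hmem.2
    -- each singleton {z} is a part
    have hzpart : ∀ z : V, ({z} : Finset V) ∈ P.parts := by
      intro z
      obtain ⟨T, hT, hzT⟩ := P.exists_mem (Finset.mem_univ z)
      obtain ⟨w, hw⟩ := Finset.card_eq_one.mp (hsing T hT)
      rw [hw] at hzT
      rw [Finset.mem_singleton] at hzT
      subst hzT
      rwa [hw] at hT
    -- every vertex distinguishes every pair
    have H : ∀ z u v : V, u ≠ v → G.dist u z ≠ G.dist v z := by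
      intro z u v huv
      have hmem : ({z} : Finset V) ∈
          P.parts.filter fun T => setDist G u T ≠ setDist G v T := by
        rw [hfilt u v huv]; exact hzpart z
      rw [Finset.mem_filter, setDist_singleton, setDist_singleton] at hmem
      exact hmem.2
    -- unique neighbours
    have huniq : ∀ a b c : V, G.Adj a b → G.Adj a c → b = c := by
      intro a b c hab hac
      by_contra hbc
      have h1 : G.dist b a = 1 := by
        rw [SimpleGraph.dist_comm, SimpleGraph.dist_eq_one_iff_adj]; exact hab
      have h2 : G.dist c a = 1 := by
        rw [SimpleGraph.dist_comm, SimpleGraph.dist_eq_one_iff_adj]; exact hac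
      exact H a b c hbc (h1.trans h2.symm)
    -- every vertex from any other vertex: neighbour relation
    have hreach : ∀ z u : V, u = z ∨ G.Adj z u := by
      intro z u
      obtain ⟨w⟩ := hG z u
      exact walk_cases huniq w
    -- a neighbour of u₀
    have hadj : ∀ a : V, a ≠ u₀ → G.Adj u₀ a := by
      intro a ha
      rcases hreach u₀ a with h | h
      · exact absurd h ha
      · exact h
    obtain ⟨w₀, hw₀⟩ : ∃ w, G.Adj u₀ w := ⟨v₀, hadj v₀ (Ne.symm huv₀)⟩
    -- card V ≤ 2
    have hsub : (Finset.univ : Finset V) ⊆ {u₀, w₀} := by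
      intro x _
      rcases hreach u₀ x with rfl | h
      · simp
      · simp [huniq u₀ x w₀ h hw₀]
    have hcard2 : Fintype.card V ≤ 2 :=
      le_trans (Finset.card_le_card hsub)
        (le_trans (Finset.card_insert_le _ _) (by simp))
    have hVk : Fintype.card V = k := by
      have := P.sum_card_parts
      rw [Finset.sum_congr rfl hsing] at this
      simp only [Finset.sum_const, smul_eq_mul, mul_one] at this
      rw [hcard] at this
      rw [Finset.card_univ] at this
      omega
    have hk2 : k = 2 := by omega
    have hV2 : Fintype.card V = 2 := by omega
    refine ⟨hk2, ?_⟩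
    -- adjacency iff distinct
    have hadjiff : ∀ a b : V, G.Adj a b ↔ a ≠ b := by
      intro a b
      constructor
      · exact G.ne_of_adj
      · intro hab
        rcases hreach a b with rfl | h
        · exact absurd rfl hab
        · exact h
    have e : V ≃ Fin 2 := Fintype.equivFinOfCardEq hV2
    exact ⟨⟨e, by intro a b; simp [hadjiff, e.injective.ne_iff]⟩⟩
  · rintro ⟨rfl, ⟨f⟩⟩
    have hV2 : Fintype.card V = 2 := by
      have := Fintype.card_congr f.toEquiv
      simpa using this
    have hadjiff : ∀ a b : V, G.Adj a b ↔ a ≠ b := by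
      intro a b
      rw [← f.map_rel_iff]
      simp [f.toEquiv.injective.ne_iff]
    have huniv : ∀ u v : V, u ≠ v → ({u, v} : Finset V) = Finset.univ := by
      intro u v huv
      apply Finset.eq_univ_of_card
      rw [Finset.card_insert_of_notMem (by simpa using huv), Finset.card_singleton, hV2]
    -- lower bound
    have hlower : ∀ m ∈ {m | ∃ P : Finpartition (Finset.univ : Finset V),
        IsKPartitionGenerator G 2 P ∧ P.parts.card = m}, 2 ≤ m := by
      rintro m ⟨P, hgen, hcard⟩
      calc 2 ≤ _ := hgen u₀ v₀ huv₀
        _ ≤ P.parts.card := Finset.card_filter_le _ _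
        _ = m := hcard
    -- upper bound: the discrete partition
    have hmem2 : 2 ∈ {m | ∃ P : Finpartition (Finset.univ : Finset V),
        IsKPartitionGenerator G 2 P ∧ P.parts.card = m} := by
      refine ⟨⊥, ?_, by rw [Finpartition.card_bot]; simpa using hV2⟩
      intro u v huv
      have hdist : ∀ z : V, setDist G u {z} ≠ setDist G v {z} := by
        intro z
        rw [setDist_singleton, setDist_singleton]
        have hz : z = u ∨ z = v := by
          have := huniv u v huv
          have hzm : z ∈ ({u, v} : Finset V) := this ▸ Finset.mem_univ z
          simpa using hzm
        rcases hz with rfl | rfl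
        · rw [SimpleGraph.dist_self, SimpleGraph.dist_comm,
            SimpleGraph.dist_eq_one_iff_adj.mpr ((hadjiff z v).mpr huv)]
          omega
        · rw [SimpleGraph.dist_self, SimpleGraph.dist_comm,
            SimpleGraph.dist_eq_one_iff_adj.mpr ((hadjiff z u).mpr (Ne.symm huv))]
          omega
      have : ((⊥ : Finpartition (Finset.univ : Finset V)).parts.filter
          fun S => setDist G u S ≠ setDist G v S) =
          (⊥ : Finpartition (Finset.univ : Finset V)).parts := by
        apply Finset.filter_true_of_mem
        intro S hS
        rw [Finpartition.mem_bot_iff] at hS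
        obtain ⟨a, _, rfl⟩ := hS
        exact hdist a
      rw [this, Finpartition.card_bot]
      simp [hV2]
    exact le_antisymm (Nat.sInf_le hmem2) (le_csInf ⟨2, hmem2⟩ hlower)
end

section
/- A connected graph G of order n ≥ 2 satisfies 𝔡*(G) ≤ 3 if and only if G ≅ K_n or G ≅ K_n − e (a complete graph minus one edge). -/
open SimpleGraph Finset

lemma exists_penultimate {V : Type*} {G : SimpleGraph V} (hG : G.Connected) {x y : V} {k : ℕ}
    (h : G.dist x y = k + 1) : ∃ z, G.Adj x z ∧ G.dist z y = k := by
  obtain ⟨p, hp⟩ := hG.exists_walk_length_eq_dist x y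
  cases p with
  | nil => rw [SimpleGraph.Walk.length_nil, h] at hp; omega
  | cons hadj q =>
    rename_i w
    rw [SimpleGraph.Walk.length_cons, h] at hp
    refine ⟨w, hadj, le_antisymm ?_ ?_⟩
    · have := SimpleGraph.dist_le q
      omega
    · have htri : G.dist x y ≤ G.dist x w + G.dist w y := hG.dist_triangle
      have h1 : G.dist x w = 1 := SimpleGraph.dist_eq_one_iff_adj.mpr hadj
      omega

lemma mem_DG {V : Type*} [Fintype V] {G : SimpleGraph V} {x y z : V} :
    z ∈ DG G x y ↔ G.dist z x ≠ G.dist z y := by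
  simp [DG]

lemma card_DG_le_frakdStar {V : Type*} [Fintype V] {G : SimpleGraph V} {x y : V} (hxy : x ≠ y) :
    (DG G x y).card ≤ frakdStar G := by
  unfold frakdStar
  apply le_csSup
  · refine ⟨Fintype.card V, ?_⟩
    rintro m ⟨x, y, -, rfl⟩
    exact (Finset.card_filter_le _ _).trans (le_of_eq Finset.card_univ)
  · exact ⟨x, y, hxy, rfl⟩

lemma two_outside {V : Type*} [Fintype V] [DecidableEq V] {G : SimpleGraph V}
    (key : ∀ x y : V, x ≠ y → (DG G x y).card ≤ 3) (hG : G.Connected)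
    {x y z1 z2 : V} (hxy : x ≠ y) (hxz1 : x ≠ z1) (hxz2 : x ≠ z2)
    (hyz1 : y ≠ z1) (hyz2 : y ≠ z2) (hz12 : z1 ≠ z2)
    (h1 : G.dist z1 x ≠ G.dist z1 y) (h2 : G.dist z2 x ≠ G.dist z2 y) : False := by
  have hx : x ∈ DG G x y := by
    rw [mem_DG, SimpleGraph.dist_self]
    exact (hG.pos_dist_of_ne hxy).ne
  have hy : y ∈ DG G x y := by
    rw [mem_DG, SimpleGraph.dist_self]
    exact (hG.pos_dist_of_ne hxy.symm).ne'
  have hsub : ({x, y, z1, z2} : Finset V) ⊆ DG G x y := by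
    intro w hw
    simp only [Finset.mem_insert, Finset.mem_singleton] at hw
    rcases hw with rfl | rfl | rfl | rfl
    · exact hx
    · exact hy
    · exact mem_DG.mpr h1
    · exact mem_DG.mpr h2
  have hc : ({x, y, z1, z2} : Finset V).card = 4 := by
    rw [Finset.card_insert_of_notMem (by simp [hxy, hxz1, hxz2]),
      Finset.card_insert_of_notMem (by simp [hyz1, hyz2]),
      Finset.card_insert_of_notMem (by simp [hz12]), Finset.card_singleton]
  have := Finset.card_le_card hsub
  have := key x y hxy
  omega

theorem stmt_18 {V : Type*} [Fintype V] [DecidableEq V] (G : SimpleGraph V)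
    (hG : G.Connected) (hn : 2 ≤ Fintype.card V) :
    frakdStar G ≤ 3 ↔
      Nonempty (G ≃g (⊤ : SimpleGraph (Fin (Fintype.card V)))) ∨
      ∃ u v : Fin (Fintype.card V), u ≠ v ∧
        Nonempty (G ≃g ((⊤ : SimpleGraph (Fin (Fintype.card V))).deleteEdges {s(u, v)})) := by
  constructor
  · intro h
    have key : ∀ x y : V, x ≠ y → (DG G x y).card ≤ 3 := fun x y hxy =>
      le_trans (card_DG_le_frakdStar hxy) h
    -- diameter at most 2
    have hdiam : ∀ x y : V, G.dist x y ≤ 2 := by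
      intro x y
      by_contra hcon
      push_neg at hcon
      have hxy : x ≠ y := by
        rintro rfl
        rw [SimpleGraph.dist_self] at hcon
        omega
      obtain ⟨z1, ha1, hd1⟩ := exists_penultimate hG
        (show G.dist x y = (G.dist x y - 1) + 1 by omega)
      obtain ⟨z2, ha2, hd2⟩ := exists_penultimate hG
        (show G.dist y x = (G.dist x y - 1) + 1 by rw [SimpleGraph.dist_comm]; omega)
      have e1 : G.dist z1 x = 1 := SimpleGraph.dist_eq_one_iff_adj.mpr ha1.symm
      have e2 : G.dist z2 y = 1 := SimpleGraph.dist_eq_one_iff_adj.mpr ha2.symm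
      have e3 : G.dist z1 y = G.dist x y - 1 := hd1
      have e4 : G.dist z2 x = G.dist x y - 1 := by rw [hd2, SimpleGraph.dist_comm]
      have exy : G.dist y x = G.dist x y := SimpleGraph.dist_comm ..
      have hxz1 : x ≠ z1 := by
        rintro rfl; rw [SimpleGraph.dist_self] at e1; omega
      have hxz2 : x ≠ z2 := by
        rintro rfl; rw [SimpleGraph.dist_self] at e4; omega
      have hyz1 : y ≠ z1 := by
        rintro rfl; rw [SimpleGraph.dist_self] at e3; omega
      have hyz2 : y ≠ z2 := by
        rintro rfl; rw [SimpleGraph.dist_self] at e2; omega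
      have hz12 : z1 ≠ z2 := by
        rintro rfl; omega
      exact two_outside key hG hxy hxz1 hxz2 hyz1 hyz2 hz12 (by omega) (by omega)
    have hdist1 : ∀ x y : V, G.Adj x y → G.dist x y = 1 := fun _ _ h =>
      SimpleGraph.dist_eq_one_iff_adj.mpr h
    have hdist2 : ∀ x y : V, x ≠ y → ¬ G.Adj x y → G.dist x y = 2 := by
      intro x y hne hadj
      have h0 : G.dist x y ≠ 0 := (hG.pos_dist_of_ne hne).ne'
      have h1 : G.dist x y ≠ 1 := fun hh => hadj (SimpleGraph.dist_eq_one_iff_adj.mp hh)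
      have := hdiam x y
      omega
    -- complement has max degree ≤ 1
    have claimB : ∀ v b c : V, b ≠ c → v ≠ b → v ≠ c → ¬G.Adj v b → ¬G.Adj v c → False := by
      intro v b c hbc hvb hvc h1 h2
      obtain ⟨w, hvw, hwb⟩ := exists_penultimate hG (k := 1) (hdist2 v b hvb h1)
      obtain ⟨w', hvw', hw'c⟩ := exists_penultimate hG (k := 1) (hdist2 v c hvc h2)
      have hwb' : G.Adj w b := SimpleGraph.dist_eq_one_iff_adj.mp hwb
      have hw'c' : G.Adj w' c := SimpleGraph.dist_eq_one_iff_adj.mp hw'c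
      have hbw : b ≠ w := fun hh => h1 (hh ▸ hvw)
      have hcw' : c ≠ w' := fun hh => h2 (hh ▸ hvw')
      have hcw : c ≠ w := fun hh => h2 (hh ▸ hvw)
      have hbw' : b ≠ w' := fun hh => h1 (hh ▸ hvw')
      have hvw_ne : v ≠ w := hvw.ne
      have hvw'_ne : v ≠ w' := hvw'.ne
      have hncw : ¬ G.Adj c w := by
        intro hcwAdj
        have d1 : G.dist b v = 2 := by rw [SimpleGraph.dist_comm]; exact hdist2 v b hvb h1
        have d2 : G.dist b w = 1 := hdist1 b w hwb'.symm
        have d3 : G.dist c v = 2 := by rw [SimpleGraph.dist_comm]; exact hdist2 v c hvc h2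
        have d4 : G.dist c w = 1 := hdist1 c w hcwAdj
        exact two_outside key hG hvw_ne hvb hvc hbw.symm hcw.symm hbc (by omega) (by omega)
      have hnbw' : ¬ G.Adj b w' := by
        intro hbw'Adj
        have d1 : G.dist b v = 2 := by rw [SimpleGraph.dist_comm]; exact hdist2 v b hvb h1
        have d2 : G.dist b w' = 1 := hdist1 b w' hbw'Adj
        have d3 : G.dist c v = 2 := by rw [SimpleGraph.dist_comm]; exact hdist2 v c hvc h2
        have d4 : G.dist c w' = 1 := hdist1 c w' hw'c'.symm
        exact two_outside key hG hvw'_ne hvb hvc hbw'.symm hcw'.symm hbc (by omega) (by omega)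
      have hww' : w ≠ w' := by
        rintro rfl
        exact hncw hw'c'.symm
      have d1 : G.dist b w = 1 := hdist1 b w hwb'.symm
      have d2 : G.dist b w' = 2 := hdist2 b w' hbw' hnbw'
      have d3 : G.dist c w = 2 := hdist2 c w hcw hncw
      have d4 : G.dist c w' = 1 := hdist1 c w' hw'c'.symm
      exact two_outside key hG hww' hbw.symm hcw.symm hbw'.symm hcw'.symm hbc
        (by omega) (by omega)
    -- complement has at most one edge
    have claimA : ∀ a b c d : V, a ≠ b → c ≠ d → s(a, b) ≠ s(c, d) →
        ¬G.Adj a b → ¬G.Adj c d → False := by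
      intro a b c d hab hcd hs h1 h2
      have hac : a ≠ c := by
        rintro rfl
        refine claimB a b d ?_ hab hcd h1 h2
        rintro rfl
        exact hs rfl
      have had : a ≠ d := by
        rintro rfl
        refine claimB a b c ?_ hab hcd.symm h1 (fun hh => h2 hh.symm)
        rintro rfl
        exact hs (Sym2.eq_swap)
      have hbc : b ≠ c := by
        rintro rfl
        refine claimB b a d ?_ hab.symm hcd (fun hh => h1 hh.symm) h2
        rintro rfl
        exact hs (Sym2.eq_swap)
      have hbd : b ≠ d := by
        rintro rfl
        refine claimB b a c ?_ hab.symm hcd.symm (fun hh => h1 hh.symm)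
          (fun hh => h2 hh.symm)
        rintro rfl
        exact hs rfl
      have hadjbc : G.Adj b c := by
        by_contra hn
        exact claimB b a c hac hab.symm hbc (fun hh => h1 hh.symm) hn
      have hadjad : G.Adj a d := by
        by_contra hn
        exact claimB a b d hbd hab had h1 hn
      have d1 : G.dist b a = 2 := by rw [SimpleGraph.dist_comm]; exact hdist2 a b hab h1
      have d2 : G.dist b c = 1 := hdist1 b c hadjbc
      have d3 : G.dist d a = 1 := hdist1 d a hadjad.symm
      have d4 : G.dist d c = 2 := by rw [SimpleGraph.dist_comm]; exact hdist2 c d hcd h2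
      exact two_outside key hG hac hab had hbc.symm hcd hbd (by omega) (by omega)
    by_cases hcomp : ∀ x y : V, x ≠ y → G.Adj x y
    · refine Or.inl ⟨⟨Fintype.equivFin V, ?_⟩⟩
      intro p q
      simp only [SimpleGraph.top_adj, ne_eq, EmbeddingLike.apply_eq_iff_eq]
      exact ⟨fun hh => hcomp p q hh, fun hh => hh.ne⟩
    · push_neg at hcomp
      obtain ⟨a, b, hab, hnab⟩ := hcomp
      have huniq : ∀ x y : V, x ≠ y → ¬G.Adj x y → s(x, y) = s(a, b) := by
        intro x y hxy hn
        by_contra hs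
        exact claimA x y a b hxy hab hs hn hnab
      refine Or.inr ⟨Fintype.equivFin V a, Fintype.equivFin V b,
        by simpa using hab, ⟨⟨Fintype.equivFin V, ?_⟩⟩⟩
      intro p q
      simp only [SimpleGraph.deleteEdges_adj, SimpleGraph.top_adj, Set.mem_singleton_iff,
        ne_eq, EmbeddingLike.apply_eq_iff_eq]
      have hsym : s(Fintype.equivFin V p, Fintype.equivFin V q) =
          s(Fintype.equivFin V a, Fintype.equivFin V b) ↔ s(p, q) = s(a, b) := by
        rw [← Sym2.map_pair_eq (Fintype.equivFin V), ← Sym2.map_pair_eq (Fintype.equivFin V)]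
        exact ⟨fun hh => Sym2.map.injective (Fintype.equivFin V).injective hh,
          fun hh => by rw [hh]⟩
      rw [hsym]
      constructor
      · rintro ⟨hpq, hs⟩
        by_contra hn
        exact hs (huniq p q hpq hn)
      · intro hh
        refine ⟨hh.ne, fun hs => ?_⟩
        rw [Sym2.eq_iff] at hs
        rcases hs with ⟨rfl, rfl⟩ | ⟨rfl, rfl⟩
        · exact hnab hh
        · exact hnab hh.symm
  · rintro (hf | ⟨u, v, huv, hf⟩)
    · obtain ⟨f⟩ := hf
      have hadj : ∀ x y : V, x ≠ y → G.Adj x y := by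
        intro x y hxy
        rw [← f.map_rel_iff]
        simpa using fun hh => hxy (f.injective hh)
      unfold frakdStar
      apply csSup_le'
      rintro m ⟨x, y, hxy, rfl⟩
      have hsub : DG G x y ⊆ {x, y} := by
        intro z hz
        rw [mem_DG] at hz
        by_contra hzm
        simp only [Finset.mem_insert, Finset.mem_singleton] at hzm
        push_neg at hzm
        exact hz (by rw [SimpleGraph.dist_eq_one_iff_adj.mpr (hadj z x hzm.1),
          SimpleGraph.dist_eq_one_iff_adj.mpr (hadj z y hzm.2)])
      have h2 : ({x, y} : Finset V).card ≤ 2 := (Finset.card_insert_le _ _).trans (by simp)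
      have := Finset.card_le_card hsub
      omega
    · obtain ⟨f⟩ := hf
      obtain ⟨a, ha⟩ : ∃ a, f.symm u = a := ⟨_, rfl⟩
      obtain ⟨b, hb⟩ : ∃ b, f.symm v = b := ⟨_, rfl⟩
      have hfa : f a = u := by rw [← ha]; exact f.apply_symm_apply u
      have hfb : f b = v := by rw [← hb]; exact f.apply_symm_apply v
      have hab : a ≠ b := by
        intro hh
        exact huv (f.symm.injective (by rw [ha, hb, hh]))
      have hadjG : ∀ p q : V, G.Adj p q ↔ (p ≠ q ∧ s(p, q) ≠ s(a, b)) := by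
        intro p q
        rw [← f.map_rel_iff]
        simp only [SimpleGraph.deleteEdges_adj, SimpleGraph.top_adj, Set.mem_singleton_iff,
          ne_eq]
        have h1' : (f p = f q) ↔ p = q := ⟨fun hh => f.injective hh, fun hh => by rw [hh]⟩
        have h2' : s(f p, f q) = s(u, v) ↔ s(p, q) = s(a, b) := by
          constructor
          · intro hh
            apply Sym2.map.injective f.injective
            rw [Sym2.map_pair_eq, Sym2.map_pair_eq, hfa, hfb]
            exact hh
          · intro hh
            calc s(f p, f q) = Sym2.map f s(p, q) := (Sym2.map_pair_eq f p q).symm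
              _ = Sym2.map f s(a, b) := by rw [hh]
              _ = s(f a, f b) := Sym2.map_pair_eq f a b
              _ = s(u, v) := by rw [hfa, hfb]
        rw [h1', h2']
      have hone : ∀ p q : V, p ≠ q → s(p, q) ≠ s(a, b) → G.dist p q = 1 :=
        fun p q hh1 hh2 => SimpleGraph.dist_eq_one_iff_adj.mpr ((hadjG p q).mpr ⟨hh1, hh2⟩)
      unfold frakdStar
      apply csSup_le'
      rintro m ⟨x, y, hxy, rfl⟩
      by_cases hmeet : a = x ∨ a = y ∨ b = x ∨ b = y
      · have hsub : DG G x y ⊆ {x, y} ∪ {a, b} := by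
          intro z hz
          rw [mem_DG] at hz
          by_contra hzm
          simp only [Finset.mem_union, Finset.mem_insert, Finset.mem_singleton] at hzm
          push_neg at hzm
          obtain ⟨⟨hzx, hzy⟩, hza, hzb⟩ := hzm
          have e1 : s(z, x) ≠ s(a, b) := by
            intro hh
            rw [Sym2.eq_iff] at hh
            rcases hh with ⟨hh, -⟩ | ⟨hh, -⟩
            · exact hza hh
            · exact hzb hh
          have e2 : s(z, y) ≠ s(a, b) := by
            intro hh
            rw [Sym2.eq_iff] at hh
            rcases hh with ⟨hh, -⟩ | ⟨hh, -⟩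
            · exact hza hh
            · exact hzb hh
          exact hz (by rw [hone z x hzx e1, hone z y hzy e2])
        have hinter : 1 ≤ (({x, y} : Finset V) ∩ {a, b}).card := by
          rw [Nat.one_le_iff_ne_zero, ← Nat.pos_iff_ne_zero, Finset.card_pos]
          rcases hmeet with hh | hh | hh | hh
          · exact ⟨a, Finset.mem_inter.mpr ⟨by simp [hh], by simp⟩⟩
          · exact ⟨a, Finset.mem_inter.mpr ⟨by simp [hh], by simp⟩⟩
          · exact ⟨b, Finset.mem_inter.mpr ⟨by simp [hh], by simp⟩⟩
          · exact ⟨b, Finset.mem_inter.mpr ⟨by simp [hh], by simp⟩⟩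
        have hu := Finset.card_union_add_card_inter ({x, y} : Finset V) {a, b}
        have h2 : ({x, y} : Finset V).card ≤ 2 := (Finset.card_insert_le _ _).trans (by simp)
        have h3 : ({a, b} : Finset V).card ≤ 2 := (Finset.card_insert_le _ _).trans (by simp)
        have := Finset.card_le_card hsub
        omega
      · push_neg at hmeet
        obtain ⟨h1, h2, h3, h4⟩ := hmeet
        have hsub : DG G x y ⊆ {x, y} := by
          intro z hz
          rw [mem_DG] at hz
          by_contra hzm
          simp only [Finset.mem_insert, Finset.mem_singleton] at hzm
          push_neg at hzm
          have e1 : s(z, x) ≠ s(a, b) := by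
            intro hh
            rw [Sym2.eq_iff] at hh
            rcases hh with ⟨-, hh⟩ | ⟨-, hh⟩
            · exact h3 hh.symm
            · exact h1 hh.symm
          have e2 : s(z, y) ≠ s(a, b) := by
            intro hh
            rw [Sym2.eq_iff] at hh
            rcases hh with ⟨-, hh⟩ | ⟨-, hh⟩
            · exact h4 hh.symm
            · exact h2 hh.symm
          exact hz (by rw [hone z x hzm.1 e1, hone z y hzm.2 e2])
        have h2' : ({x, y} : Finset V).card ≤ 2 := (Finset.card_insert_le _ _).trans (by simp)
        have := Finset.card_le_card hsub
        omega
end
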